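/- arXiv:2102.00418 — 4 statements merged into one kernel-verified Lean document; each statement's English description precedes it below -/
import Mathlib

section
/- With the Tchebycheffian Bernstein recursion hypotheses in force (positive continuous weights w_0 ≡ 1, w_1, …, w_p on [x_0, x_1], functions B_{j,q} satisfying the integral recurrence with positive normalization integrals b_{j,q−1}), the functions on each level form a weighted partition of unity: for every 0 ≤ q ≤ p and every x ∈ [x_0, x_1], ∑_{j=0}^{q} B_{j,q}(x) = w_{p−q}(x). In particular, since w_0 ≡ 1, the top-level functions satisfy ∑_{j=0}^{p} B_{j,p}(x) = 1 for all x ∈ [x_0, x_1]. -/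
/-- Under the Tchebycheffian Bernstein integral recurrence hypotheses with positive
continuous weights `w_0 ≡ 1, w_1, …, w_p` on `[x_0, x_1]` and positive normalization
integrals, each level forms a weighted partition of unity:
`∑_{j=0}^{q} B_{j,q}(x) = w_{p−q}(x)` for `0 ≤ q ≤ p` and `x ∈ [x_0, x_1]`.
In particular (`w_0 ≡ 1`) the top level satisfies `∑_{j=0}^{p} B_{j,p}(x) = 1`. -/
theorem tcheb_bernstein_weighted_partition_of_unity
    (x0 x1 : ℝ) (hx : x0 < x1) (p : ℕ) (w : ℕ → ℝ → ℝ) (B : ℕ → ℕ → ℝ → ℝ)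
    (hw_cont : ∀ j ≤ p, ContinuousOn (w j) (Set.Icc x0 x1))
    (hw_pos : ∀ j ≤ p, ∀ x ∈ Set.Icc x0 x1, 0 < w j x)
    (hw0 : ∀ x ∈ Set.Icc x0 x1, w 0 x = 1)
    (hB_cont : ∀ q ≤ p, ∀ j ≤ q, ContinuousOn (B j q) (Set.Icc x0 x1))
    (hb_pos : ∀ q < p, ∀ j ≤ q, 0 < ∫ y in x0..x1, B j q y)
    (hrec0 : ∀ x ∈ Set.Icc x0 x1, B 0 0 x = w p x)
    (hrec_first : ∀ q < p, ∀ x ∈ Set.Icc x0 x1,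
      B 0 (q + 1) x
        = w (p - (q + 1)) x * (1 - ∫ y in x0..x, B 0 q y / (∫ z in x0..x1, B 0 q z)))
    (hrec_mid : ∀ q < p, ∀ j, 0 < j → j < q + 1 → ∀ x ∈ Set.Icc x0 x1,
      B j (q + 1) x
        = w (p - (q + 1)) x *
            ∫ y in x0..x, (B (j - 1) q y / (∫ z in x0..x1, B (j - 1) q z)
              - B j q y / (∫ z in x0..x1, B j q z)))
    (hrec_last : ∀ q < p, ∀ x ∈ Set.Icc x0 x1,
      B (q + 1) (q + 1) x
        = w (p - (q + 1)) x * ∫ y in x0..x, B q q y / (∫ z in x0..x1, B q q z)) :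
    (∀ q ≤ p, ∀ x ∈ Set.Icc x0 x1,
        ∑ j ∈ Finset.range (q + 1), B j q x = w (p - q) x) ∧
    (∀ x ∈ Set.Icc x0 x1, ∑ j ∈ Finset.range (p + 1), B j p x = 1) := by
  have key : ∀ q ≤ p, ∀ x ∈ Set.Icc x0 x1,
      ∑ j ∈ Finset.range (q + 1), B j q x = w (p - q) x := by
    intro q
    induction q with
    | zero =>
      intro _ x hx'
      simpa using hrec0 x hx'
    | succ q ih =>
      intro hq x hx'
      have hq' : q < p := Nat.lt_of_succ_le hq
      have hqp : q ≤ p := le_of_lt hq'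
      have hint : ∀ j ≤ q, IntervalIntegrable
          (fun y => B j q y / (∫ z in x0..x1, B j q z)) MeasureTheory.volume x0 x := by
        intro j hj
        have hc : ContinuousOn (B j q) (Set.Icc x0 x1) := hB_cont q hqp j hj
        have hsub : Set.uIcc x0 x ⊆ Set.Icc x0 x1 := by
          rw [Set.uIcc_of_le hx'.1]
          exact Set.Icc_subset_Icc le_rfl hx'.2
        exact ((hc.mono hsub).intervalIntegrable).div_const _
      set I : ℕ → ℝ := fun j => ∫ y in x0..x, B j q y / (∫ z in x0..x1, B j q z) with hI
      have hmid : ∀ j < q, B (j+1) (q+1) x = w (p - (q+1)) x * (I j - I (j+1)) := by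
        intro j hj
        rw [hrec_mid q hq' (j+1) (Nat.succ_pos j) (Nat.succ_lt_succ hj) x hx']
        simp only [Nat.add_sub_cancel]
        rw [intervalIntegral.integral_sub (hint j (le_of_lt hj)) (hint (j+1) hj)]
      have hfirst : B 0 (q+1) x = w (p - (q+1)) x * (1 - I 0) := hrec_first q hq' x hx'
      have hlast : B (q+1) (q+1) x = w (p - (q+1)) x * I q := hrec_last q hq' x hx'
      rw [Finset.sum_range_succ, Finset.sum_range_succ']
      have htel : ∑ j ∈ Finset.range q, B (j+1) (q+1) x
          = w (p-(q+1)) x * (I 0 - I q) := by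
        rw [Finset.sum_congr rfl fun j hj => hmid j (Finset.mem_range.mp hj),
          ← Finset.mul_sum, Finset.sum_range_sub']
      rw [htel, hfirst, hlast]
      ring
  refine ⟨key, ?_⟩
  intro x hx'
  have h := key p le_rfl x hx'
  rwa [Nat.sub_self, hw0 x hx'] at h
end

section
/- With the Tchebycheffian Bernstein recursion hypotheses in force (positive continuous weights w_0 ≡ 1, w_1, …, w_p on [x_0, x_1], functions B_{j,q} satisfying the integral recurrence with positive normalization integrals b_{j,q−1}), every Tchebycheffian Bernstein function is non-negative on the interval: B_{j,q}(x) ≥ 0 for all 0 ≤ j ≤ q ≤ p and all x ∈ [x_0, x_1]. -/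
open intervalIntegral Set MeasureTheory Topology Filter

/-- Linear combination of Tchebycheffian Bernstein functions at level `q`. -/
def tbS (B : ℕ → ℕ → ℝ → ℝ) (q : ℕ) (c : ℕ → ℝ) : ℝ → ℝ :=
  fun x => ∑ j ∈ Finset.range (q + 1), c j * B j q x

/-- Difference/normalization operator on coefficient vectors. -/
noncomputable def tbD (x0 x1 : ℝ) (B : ℕ → ℕ → ℝ → ℝ) (q : ℕ) (c : ℕ → ℝ) : ℕ → ℝ :=
  fun j => (c (j + 1) - c j) / ∫ z in x0..x1, B j q z

/-- Vanishing order of the coefficient chain at the left endpoint. -/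
noncomputable def tbLam (x0 x1 : ℝ) (B : ℕ → ℕ → ℝ → ℝ) : ℕ → (ℕ → ℝ) → ℕ
  | 0, _ => 0
  | q + 1, c => if c 0 = 0 then tbLam x0 x1 B q (tbD x0 x1 B q c) + 1 else 0

/-- Vanishing order of the coefficient chain at the right endpoint. -/
noncomputable def tbRho (x0 x1 : ℝ) (B : ℕ → ℕ → ℝ → ℝ) : ℕ → (ℕ → ℝ) → ℕ
  | 0, _ => 0
  | q + 1, c => if c (q + 1) = 0 then tbRho x0 x1 B q (tbD x0 x1 B q c) + 1 else 0

/-- Abel-summation / telescoping identity. -/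
theorem tb_tele (Q : ℕ) (c F : ℕ → ℝ) :
    c 0 * (1 - F 0) + (∑ i ∈ Finset.range Q, c (i + 1) * (F i - F (i + 1)))
      + c (Q + 1) * F Q
    = c 0 + ∑ j ∈ Finset.range (Q + 1), (c (j + 1) - c j) * F j := by
  induction Q with
  | zero => simp; ring
  | succ Q ih =>
      rw [Finset.sum_range_succ, Finset.sum_range_succ (f := fun j => (c (j+1) - c j) * F j)]
      nlinarith [ih]

section TB

variable {x0 x1 : ℝ} {p : ℕ} {w : ℕ → ℝ → ℝ} {B : ℕ → ℕ → ℝ → ℝ}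

theorem tb_contS (hB_cont : ∀ q ≤ p, ∀ j ≤ q, ContinuousOn (B j q) (Set.Icc x0 x1))
    {q : ℕ} (hq : q ≤ p) (c : ℕ → ℝ) : ContinuousOn (tbS B q c) (Set.Icc x0 x1) := by
  apply continuousOn_finset_sum
  intro j hj
  exact continuousOn_const.mul (hB_cont q hq j (Nat.lt_succ_iff.mp (Finset.mem_range.mp hj)))

theorem tb_intB (hB_cont : ∀ q ≤ p, ∀ j ≤ q, ContinuousOn (B j q) (Set.Icc x0 x1))
    {q j : ℕ} (hq : q ≤ p) (hj : j ≤ q) {a b : ℝ} (h0 : x0 ≤ a) (hab : a ≤ b) (h1 : b ≤ x1) :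
    IntervalIntegrable (fun y => B j q y) volume a b := by
  apply ContinuousOn.intervalIntegrable
  rw [Set.uIcc_of_le hab]
  exact (hB_cont q hq j hj).mono (Set.Icc_subset_Icc h0 h1)

theorem tb_intS (hB_cont : ∀ q ≤ p, ∀ j ≤ q, ContinuousOn (B j q) (Set.Icc x0 x1))
    {q : ℕ} (hq : q ≤ p) (c : ℕ → ℝ) {a b : ℝ} (h0 : x0 ≤ a) (hab : a ≤ b) (h1 : b ≤ x1) :
    IntervalIntegrable (tbS B q c) volume a b := by
  apply ContinuousOn.intervalIntegrable
  rw [Set.uIcc_of_le hab]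
  exact (tb_contS hB_cont hq c).mono (Set.Icc_subset_Icc h0 h1)

/-- The key structural identity. -/
theorem tb_struct (hx : x0 < x1)
    (hB_cont : ∀ q ≤ p, ∀ j ≤ q, ContinuousOn (B j q) (Set.Icc x0 x1))
    (hb_pos : ∀ q < p, ∀ j ≤ q, 0 < ∫ y in x0..x1, B j q y)
    (hrec_first : ∀ q < p, ∀ x ∈ Set.Icc x0 x1,
      B 0 (q + 1) x
        = w (p - (q + 1)) x * (1 - ∫ y in x0..x, B 0 q y / (∫ z in x0..x1, B 0 q z)))
    (hrec_mid : ∀ q < p, ∀ j, 0 < j → j < q + 1 → ∀ x ∈ Set.Icc x0 x1,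
      B j (q + 1) x
        = w (p - (q + 1)) x *
            ∫ y in x0..x, (B (j - 1) q y / (∫ z in x0..x1, B (j - 1) q z)
              - B j q y / (∫ z in x0..x1, B j q z)))
    (hrec_last : ∀ q < p, ∀ x ∈ Set.Icc x0 x1,
      B (q + 1) (q + 1) x
        = w (p - (q + 1)) x * ∫ y in x0..x, B q q y / (∫ z in x0..x1, B q q z))
    {q : ℕ} (hqp : q < p) (c : ℕ → ℝ) {x : ℝ} (hx0x : x0 ≤ x) (hxx1 : x ≤ x1) :
    tbS B (q + 1) c x
      = w (p - (q + 1)) x * (c 0 + ∫ y in x0..x, tbS B q (tbD x0 x1 B q c) y) := by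
  have hxI : x ∈ Set.Icc x0 x1 := ⟨hx0x, hxx1⟩
  have hq : q ≤ p := le_of_lt hqp
  set b : ℕ → ℝ := fun j => ∫ z in x0..x1, B j q z with hb
  set L : ℕ → ℝ := fun j => ∫ y in x0..x, B j q y with hL
  have hbne : ∀ j ≤ q, b j ≠ 0 := fun j hj => (hb_pos q hqp j hj).ne'
  -- step 1 : the integral of tbS is a finite sum of the L's
  have step1 : (∫ y in x0..x, tbS B q (tbD x0 x1 B q c) y)
      = ∑ j ∈ Finset.range (q + 1), tbD x0 x1 B q c j * L j := by
    simp only [tbS]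
    rw [intervalIntegral.integral_finset_sum]
    · exact Finset.sum_congr rfl fun j hj => intervalIntegral.integral_const_mul _ _
    · intro j hj
      exact (tb_intB hB_cont hq (Nat.lt_succ_iff.mp (Finset.mem_range.mp hj)) le_rfl hx0x
        hxx1).const_mul _
  -- step 2 : rewrite the divided integrals
  have hdivint : ∀ j ≤ q, (∫ y in x0..x, B j q y / b j) = L j / b j := by
    intro j hj
    rw [intervalIntegral.integral_div]
  -- values of the Bernstein functions at level q+1
  have A0 : B 0 (q + 1) x = w (p - (q + 1)) x * (1 - L 0 / b 0) := by
    rw [hrec_first q hqp x hxI, hdivint 0 (Nat.zero_le q)]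
  have Amid : ∀ i < q, B (i + 1) (q + 1) x
      = w (p - (q + 1)) x * (L i / b i - L (i + 1) / b (i + 1)) := by
    intro i hi
    have h := hrec_mid q hqp (i + 1) (Nat.succ_pos i) (by omega) x hxI
    simp only [Nat.add_sub_cancel] at h
    rw [h]
    congr 1
    rw [intervalIntegral.integral_sub
      ((tb_intB hB_cont hq (le_of_lt hi) le_rfl hx0x hxx1).div_const _)
      ((tb_intB hB_cont hq hi le_rfl hx0x hxx1).div_const _),
      hdivint i (le_of_lt hi), hdivint (i + 1) hi]
  have Alast : B (q + 1) (q + 1) x = w (p - (q + 1)) x * (L q / b q) := by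
    rw [hrec_last q hqp x hxI, hdivint q le_rfl]
  -- expand the sum
  have expand : tbS B (q + 1) c x
      = c 0 * B 0 (q + 1) x + ((∑ i ∈ Finset.range q, c (i + 1) * B (i + 1) (q + 1) x)
          + c (q + 1) * B (q + 1) (q + 1) x) := by
    rw [tbS, Finset.sum_range_succ' (fun j => c j * B j (q + 1) x) (q + 1),
      Finset.sum_range_succ (fun i => c (i + 1) * B (i + 1) (q + 1) x) q]
    ring
  rw [expand, A0, Alast]
  have hmid : (∑ i ∈ Finset.range q, c (i + 1) * B (i + 1) (q + 1) x)
      = ∑ i ∈ Finset.range q,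
          c (i + 1) * (w (p - (q + 1)) x * (L i / b i - L (i + 1) / b (i + 1))) := by
    refine Finset.sum_congr rfl fun i hi => ?_
    rw [Amid i (Finset.mem_range.mp hi)]
  rw [hmid, step1]
  have : ∑ j ∈ Finset.range (q + 1), tbD x0 x1 B q c j * L j
      = ∑ j ∈ Finset.range (q + 1), (c (j + 1) - c j) * (L j / b j) := by
    refine Finset.sum_congr rfl fun j hj => ?_
    rw [tbD]
    ring
  rw [this]
  have tele := tb_tele q c (fun j => L j / b j)
  set W := w (p - (q + 1)) x
  have hs : (∑ i ∈ Finset.range q, c (i + 1) * (W * (L i / b i - L (i + 1) / b (i + 1))))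
      = W * ∑ i ∈ Finset.range q, c (i + 1) * (L i / b i - L (i + 1) / b (i + 1)) := by
    rw [Finset.mul_sum]
    exact Finset.sum_congr rfl fun i _ => by ring
  have lhs : c 0 * (W * (1 - L 0 / b 0))
      + ((∑ i ∈ Finset.range q, c (i + 1) * (W * (L i / b i - L (i + 1) / b (i + 1))))
        + c (q + 1) * (W * (L q / b q)))
      = W * (c 0 * (1 - L 0 / b 0) + ((∑ i ∈ Finset.range q,
          c (i + 1) * (L i / b i - L (i + 1) / b (i + 1))) + c (q + 1) * (L q / b q))) := by
    rw [hs]; ring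
  rw [lhs]
  congr 1
  calc c 0 * (1 - L 0 / b 0) + ((∑ i ∈ Finset.range q,
          c (i + 1) * (L i / b i - L (i + 1) / b (i + 1))) + c (q + 1) * (L q / b q))
      = c 0 * (1 - L 0 / b 0) + (∑ i ∈ Finset.range q,
          c (i + 1) * (L i / b i - L (i + 1) / b (i + 1))) + c (q + 1) * (L q / b q) := by ring
    _ = c 0 + ∑ j ∈ Finset.range (q + 1), (c (j + 1) - c j) * (L j / b j) := tele

/-- Values at the right endpoint. -/
theorem tb_valx1 (hx : x0 < x1)
    (hB_cont : ∀ q ≤ p, ∀ j ≤ q, ContinuousOn (B j q) (Set.Icc x0 x1))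
    (hb_pos : ∀ q < p, ∀ j ≤ q, 0 < ∫ y in x0..x1, B j q y)
    (hrec_first : ∀ q < p, ∀ x ∈ Set.Icc x0 x1,
      B 0 (q + 1) x
        = w (p - (q + 1)) x * (1 - ∫ y in x0..x, B 0 q y / (∫ z in x0..x1, B 0 q z)))
    (hrec_mid : ∀ q < p, ∀ j, 0 < j → j < q + 1 → ∀ x ∈ Set.Icc x0 x1,
      B j (q + 1) x
        = w (p - (q + 1)) x *
            ∫ y in x0..x, (B (j - 1) q y / (∫ z in x0..x1, B (j - 1) q z)
              - B j q y / (∫ z in x0..x1, B j q z)))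
    {q : ℕ} (hqp : q < p) :
    (∀ j ≤ q, B j (q + 1) x1 = 0) := by
  have hx1I : x1 ∈ Set.Icc x0 x1 := ⟨le_of_lt hx, le_rfl⟩
  intro j hj
  rcases j with _ | i
  · rw [hrec_first q hqp x1 hx1I, intervalIntegral.integral_div,
      div_self (hb_pos q hqp 0 (Nat.zero_le q)).ne', sub_self, mul_zero]
  · have hi : i < q := hj
    have h := hrec_mid q hqp (i + 1) (Nat.succ_pos i) (by omega) x1 hx1I
    simp only [Nat.add_sub_cancel] at h
    rw [h, intervalIntegral.integral_sub
        ((tb_intB hB_cont (le_of_lt hqp) (le_of_lt hi) le_rfl (le_of_lt hx) le_rfl).div_const _)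
        ((tb_intB hB_cont (le_of_lt hqp) hj le_rfl (le_of_lt hx) le_rfl).div_const _),
      intervalIntegral.integral_div, intervalIntegral.integral_div,
      div_self (hb_pos q hqp i (le_of_lt hi)).ne', div_self (hb_pos q hqp (i + 1) hj).ne',
      sub_self, mul_zero]

theorem tb_valx1_last (hx : x0 < x1)
    (hb_pos : ∀ q < p, ∀ j ≤ q, 0 < ∫ y in x0..x1, B j q y)
    (hrec_last : ∀ q < p, ∀ x ∈ Set.Icc x0 x1,
      B (q + 1) (q + 1) x
        = w (p - (q + 1)) x * ∫ y in x0..x, B q q y / (∫ z in x0..x1, B q q z))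
    {q : ℕ} (hqp : q < p) :
    B (q + 1) (q + 1) x1 = w (p - (q + 1)) x1 := by
  rw [hrec_last q hqp x1 ⟨le_of_lt hx, le_rfl⟩, intervalIntegral.integral_div,
    div_self (hb_pos q hqp q le_rfl).ne', mul_one]

/-- Rolle for finite zero sets. -/
theorem tb_rolle {g h : ℝ → ℝ} {a b : ℝ}
    (hg : ContinuousOn g (Set.Icc a b))
    (hd : ∀ t ∈ Set.Ioo a b, HasDerivAt g (h t) t) :
    ∀ Z : Finset ℝ, ↑Z ⊆ Set.Icc a b → (∀ t ∈ Z, g t = 0) →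
      ∃ Z' : Finset ℝ, ↑Z' ⊆ Set.Ioo a b ∧ (∀ t ∈ Z', h t = 0) ∧ Z.card ≤ Z'.card + 1 ∧
        (∀ s ∈ Z', ∃ t ∈ Z, s < t) := by
  intro Z
  induction Z using Finset.strongInduction with
  | _ Z ih =>
    intro hZsub hZzero
    by_cases hZe : Z = ∅
    · exact ⟨∅, by simp, by simp, by simp [hZe], by simp⟩
    have hne : Z.Nonempty := Finset.nonempty_iff_ne_empty.mpr hZe
    set M := Z.max' hne with hM
    have hMZ : M ∈ Z := Z.max'_mem hne
    set Z₂ := Z.erase M with hZ₂def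
    by_cases hZ₂ : Z₂ = ∅
    · refine ⟨∅, by simp, by simp, ?_, by simp⟩
      have hcard : Z₂.card = Z.card - 1 := by rw [hZ₂def, Finset.card_erase_of_mem hMZ]
      have : Z.card ≠ 0 := by simp [Finset.card_eq_zero, hZe]
      have h0 : Z₂.card = 0 := by rw [hZ₂]; simp
      omega
    have hne₂ : Z₂.Nonempty := Finset.nonempty_iff_ne_empty.mpr hZ₂
    set M₂ := Z₂.max' hne₂ with hM₂
    have hM₂Z₂ : M₂ ∈ Z₂ := Z₂.max'_mem hne₂
    have hM₂Z : M₂ ∈ Z := Finset.mem_of_mem_erase hM₂Z₂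
    have hM₂M : M₂ < M :=
      lt_of_le_of_ne (Z.le_max' M₂ hM₂Z) (Finset.ne_of_mem_erase hM₂Z₂)
    obtain ⟨Z'', hsub'', hzero'', hcard'', hlt''⟩ :=
      ih Z₂ (Finset.erase_ssubset hMZ)
        (fun t ht => hZsub (Finset.mem_of_mem_erase ht))
        (fun t ht => hZzero t (Finset.mem_of_mem_erase ht))
    have hM₂I : M₂ ∈ Set.Icc a b := hZsub hM₂Z
    have hMI : M ∈ Set.Icc a b := hZsub hMZ
    obtain ⟨r, hrmem, hr0⟩ := exists_hasDerivAt_eq_slope g h hM₂M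
      (hg.mono (Set.Icc_subset_Icc hM₂I.1 hMI.2))
      (fun t ht => hd t ⟨lt_of_le_of_lt hM₂I.1 ht.1, lt_of_lt_of_le ht.2 hMI.2⟩)
    have hrI : r ∈ Set.Ioo a b :=
      ⟨lt_of_le_of_lt hM₂I.1 hrmem.1, lt_of_lt_of_le hrmem.2 hMI.2⟩
    have hhr : h r = 0 := by
      rw [hr0, hZzero M hMZ, hZzero M₂ hM₂Z]; simp
    have hrZ'' : r ∉ Z'' := by
      intro hmem
      obtain ⟨t, htZ₂, hst⟩ := hlt'' r hmem
      have : t ≤ M₂ := Z₂.le_max' t htZ₂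
      linarith [hrmem.1]
    refine ⟨insert r Z'', ?_, ?_, ?_, ?_⟩
    · intro s hs
      rcases Finset.mem_insert.mp hs with h | h
      · exact h ▸ hrI
      · exact hsub'' h
    · intro s hs
      rcases Finset.mem_insert.mp hs with h | h
      · exact h ▸ hhr
      · exact hzero'' s h
    · rw [Finset.card_insert_of_notMem hrZ'']
      have : Z₂.card = Z.card - 1 := by rw [hZ₂def, Finset.card_erase_of_mem hMZ]
      have hZpos : 0 < Z.card := Finset.card_pos.mpr hne
      omega
    · intro s hs
      rcases Finset.mem_insert.mp hs with h | h
      · exact ⟨M, hMZ, h ▸ hrmem.2⟩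
      · obtain ⟨t, htZ₂, hst⟩ := hlt'' s h
        exact ⟨t, Finset.mem_of_mem_erase htZ₂, hst⟩

/-- The zero-counting lemma. -/
theorem tb_cz (hx : x0 < x1)
    (hw_pos : ∀ j ≤ p, ∀ x ∈ Set.Icc x0 x1, 0 < w j x)
    (hB_cont : ∀ q ≤ p, ∀ j ≤ q, ContinuousOn (B j q) (Set.Icc x0 x1))
    (hb_pos : ∀ q < p, ∀ j ≤ q, 0 < ∫ y in x0..x1, B j q y)
    (hrec0 : ∀ x ∈ Set.Icc x0 x1, B 0 0 x = w p x)
    (hrec_first : ∀ q < p, ∀ x ∈ Set.Icc x0 x1,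
      B 0 (q + 1) x
        = w (p - (q + 1)) x * (1 - ∫ y in x0..x, B 0 q y / (∫ z in x0..x1, B 0 q z)))
    (hrec_mid : ∀ q < p, ∀ j, 0 < j → j < q + 1 → ∀ x ∈ Set.Icc x0 x1,
      B j (q + 1) x
        = w (p - (q + 1)) x *
            ∫ y in x0..x, (B (j - 1) q y / (∫ z in x0..x1, B (j - 1) q z)
              - B j q y / (∫ z in x0..x1, B j q z)))
    (hrec_last : ∀ q < p, ∀ x ∈ Set.Icc x0 x1,
      B (q + 1) (q + 1) x
        = w (p - (q + 1)) x * ∫ y in x0..x, B q q y / (∫ z in x0..x1, B q q z)) :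
    ∀ q, q ≤ p → ∀ c : ℕ → ℝ, (∃ j, j ≤ q ∧ c j ≠ 0) → ∀ z : Finset ℝ,
      ↑z ⊆ Set.Ioo x0 x1 → (∀ t ∈ z, tbS B q c t = 0) →
      z.card + tbLam x0 x1 B q c + tbRho x0 x1 B q c ≤ q := by
  intro q
  induction q with
  | zero =>
      intro hq c hc z hsub hzero
      obtain ⟨j, hj, hcj⟩ := hc
      have hj0 : j = 0 := Nat.le_zero.mp hj
      subst hj0
      have hz : z = ∅ := by
        apply Finset.eq_empty_of_forall_notMem
        intro t ht
        have htI : t ∈ Set.Icc x0 x1 := Set.Ioo_subset_Icc_self (hsub ht)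
        have := hzero t ht
        simp only [tbS, zero_add, Finset.range_one, Finset.sum_singleton] at this
        rw [hrec0 t htI] at this
        exact absurd this (mul_ne_zero hcj (hw_pos p le_rfl t htI).ne')
      simp [hz, tbLam, tbRho]
  | succ q IH =>
      intro hq c hc z hsub hzero
      have hqp : q < p := hq
      set c' := tbD x0 x1 B q c with hc'def
      set g : ℝ → ℝ := fun t => c 0 + ∫ y in x0..t, tbS B q c' y with hgdef
      have hstruct : ∀ t ∈ Set.Icc x0 x1, tbS B (q + 1) c t = w (p - (q + 1)) t * g t :=
        fun t ht => tb_struct hx hB_cont hb_pos hrec_first hrec_mid hrec_last hqp c ht.1 ht.2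
      have hwpos : ∀ t ∈ Set.Icc x0 x1, 0 < w (p - (q + 1)) t :=
        fun t ht => hw_pos _ (Nat.sub_le p (q + 1)) t ht
      by_cases hcase : ∀ j ≤ q, c' j = 0
      · -- degenerate case : c is constant
        have hconst : ∀ j ≤ q + 1, c j = c 0 := by
          intro j hj
          induction j with
          | zero => rfl
          | succ i ihi =>
              have hiq : i ≤ q := by omega
              have h0 := hcase i hiq
              rw [hc'def, tbD] at h0
              have hbne : (∫ z in x0..x1, B i q z) ≠ 0 := (hb_pos q hqp i hiq).ne'
              have hsub0 : c (i + 1) - c i = 0 := by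
                rcases div_eq_zero_iff.mp h0 with h | h
                · exact h
                · exact absurd h hbne
              have := ihi (by omega)
              linarith
        have hc0 : c 0 ≠ 0 := by
          obtain ⟨j, hj, hcj⟩ := hc
          rw [hconst j hj] at hcj
          exact hcj
        have hSz : ∀ y : ℝ, tbS B q c' y = 0 := by
          intro y
          apply Finset.sum_eq_zero
          intro j hj
          rw [hcase j (Nat.lt_succ_iff.mp (Finset.mem_range.mp hj)), zero_mul]
        have hz : z = ∅ := by
          apply Finset.eq_empty_of_forall_notMem
          intro t ht
          have htI : t ∈ Set.Icc x0 x1 := Set.Ioo_subset_Icc_self (hsub ht)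
          have h1 := hstruct t htI
          rw [hzero t ht] at h1
          have h2 : g t = c 0 := by
            have : (∫ y in x0..t, tbS B q c' y) = ∫ y in x0..t, (0:ℝ) :=
              intervalIntegral.integral_congr (fun y _ => hSz y)
            rw [hgdef]
            simp only [this, intervalIntegral.integral_zero, add_zero]
          rw [h2] at h1
          exact absurd h1.symm (mul_ne_zero (hwpos t htI).ne' hc0)
        have hL : tbLam x0 x1 B (q + 1) c = 0 := by rw [tbLam, if_neg hc0]
        have hR : tbRho x0 x1 B (q + 1) c = 0 := by
          rw [tbRho, if_neg]
          rw [hconst (q + 1) le_rfl]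
          exact hc0
        simp [hz, hL, hR]
      · push_neg at hcase
        obtain ⟨j₀, hj₀, hc'j₀⟩ := hcase
        -- continuity and derivative of g
        have hScont := tb_contS hB_cont (le_of_lt hqp) c'
        have hgcont : ContinuousOn g (Set.Icc x0 x1) := by
          apply continuousOn_const.add
          have hInt : IntegrableOn (tbS B q c') (Set.uIcc x0 x1) volume := by
            rw [Set.uIcc_of_le (le_of_lt hx)]
            exact hScont.integrableOn_Icc
          have := intervalIntegral.continuousOn_primitive_interval hInt
          rwa [Set.uIcc_of_le (le_of_lt hx)] at this
        have hgd : ∀ t ∈ Set.Ioo x0 x1, HasDerivAt g (tbS B q c' t) t := by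
          intro t ht
          have h1 : IntervalIntegrable (tbS B q c') volume x0 t :=
            tb_intS hB_cont (le_of_lt hqp) c' le_rfl (le_of_lt ht.1) (le_of_lt ht.2)
          have hCA : ContinuousAt (tbS B q c') t :=
            hScont.continuousAt (Icc_mem_nhds ht.1 ht.2)
          have hm : StronglyMeasurableAtFilter (tbS B q c') (𝓝 t) volume :=
            ContinuousOn.stronglyMeasurableAtFilter isOpen_Ioo
              (hScont.mono Set.Ioo_subset_Icc_self) t ht
          exact (intervalIntegral.integral_hasDerivAt_right h1 hm hCA).const_add (c 0)
        -- zeros of g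
        have hgz : ∀ t ∈ z, g t = 0 := by
          intro t ht
          have htI : t ∈ Set.Icc x0 x1 := Set.Ioo_subset_Icc_self (hsub ht)
          have h1 := hstruct t htI
          rw [hzero t ht] at h1
          rcases mul_eq_zero.mp h1.symm with h | h
          · exact absurd h (hwpos t htI).ne'
          · exact h
        have hgx0 : g x0 = c 0 := by
          rw [hgdef]; simp
        have hgx1 : g x1 = c (q + 1) := by
          have hx1I : x1 ∈ Set.Icc x0 x1 := ⟨le_of_lt hx, le_rfl⟩
          have h1 := hstruct x1 hx1I
          have h2 : tbS B (q + 1) c x1 = c (q + 1) * w (p - (q + 1)) x1 := by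
            rw [tbS, Finset.sum_range_succ]
            rw [tb_valx1_last hx hb_pos hrec_last hqp]
            rw [Finset.sum_eq_zero, zero_add]
            intro i hi
            rw [tb_valx1 hx hB_cont hb_pos hrec_first hrec_mid hqp i
              (Nat.lt_succ_iff.mp (Finset.mem_range.mp hi)), mul_zero]
          rw [h2] at h1
          have hwne : w (p - (q + 1)) x1 ≠ 0 := (hwpos x1 hx1I).ne'
          apply mul_left_cancel₀ hwne
          rw [← h1]
          ring
        -- the new zero set is z plus possibly the endpoints
        have hx0z : x0 ∉ z := fun h => absurd (hsub h).1 (lt_irrefl x0)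
        have hx1z : x1 ∉ z := fun h => absurd (hsub h).2 (lt_irrefl x1)
        have hIH : ∀ Z' : Finset ℝ, ↑Z' ⊆ Set.Ioo x0 x1 → (∀ t ∈ Z', tbS B q c' t = 0) →
            Z'.card + tbLam x0 x1 B q c' + tbRho x0 x1 B q c' ≤ q :=
          fun Z' h1 h2 => IH (le_of_lt hqp) c' ⟨j₀, hj₀, hc'j₀⟩ Z' h1 h2
        have hzIcc : ↑z ⊆ Set.Icc x0 x1 := fun t ht => Set.Ioo_subset_Icc_self (hsub ht)
        by_cases h0 : c 0 = 0 <;> by_cases h1 : c (q + 1) = 0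
        · -- both endpoints are zeros
          set Z : Finset ℝ := insert x0 (insert x1 z) with hZdef
          have hZsub : ↑Z ⊆ Set.Icc x0 x1 := by
            rw [hZdef]
            push_cast
            intro t ht
            rcases ht with h | h | h
            · rw [h]; exact ⟨le_rfl, le_of_lt hx⟩
            · rw [h]; exact ⟨le_of_lt hx, le_rfl⟩
            · exact hzIcc h
          have hZzero : ∀ t ∈ Z, g t = 0 := by
            intro t ht
            rcases Finset.mem_insert.mp ht with h | h
            · rw [h, hgx0, h0]
            rcases Finset.mem_insert.mp h with h | h
            · rw [h, hgx1, h1]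
            · exact hgz t h
          have hZcard : Z.card = z.card + 2 := by
            rw [hZdef, Finset.card_insert_of_notMem, Finset.card_insert_of_notMem hx1z]
            intro hmem
            rcases Finset.mem_insert.mp hmem with h | h
            · exact absurd h hx.ne
            · exact hx0z h
          obtain ⟨Z', hZ'sub, hZ'zero, hZ'card, -⟩ := tb_rolle hgcont hgd Z hZsub hZzero
          have hmain := hIH Z' hZ'sub hZ'zero
          have hL : tbLam x0 x1 B (q + 1) c = tbLam x0 x1 B q c' + 1 := by
            rw [tbLam, if_pos h0]
          have hR : tbRho x0 x1 B (q + 1) c = tbRho x0 x1 B q c' + 1 := by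
            rw [tbRho, if_pos h1]
          omega
        · -- only x0 is a zero
          set Z : Finset ℝ := insert x0 z with hZdef
          have hZsub : ↑Z ⊆ Set.Icc x0 x1 := by
            rw [hZdef]; push_cast
            intro t ht
            rcases ht with h | h
            · rw [h]; exact ⟨le_rfl, le_of_lt hx⟩
            · exact hzIcc h
          have hZzero : ∀ t ∈ Z, g t = 0 := by
            intro t ht
            rcases Finset.mem_insert.mp ht with h | h
            · rw [h, hgx0, h0]
            · exact hgz t h
          have hZcard : Z.card = z.card + 1 := Finset.card_insert_of_notMem hx0z
          obtain ⟨Z', hZ'sub, hZ'zero, hZ'card, -⟩ := tb_rolle hgcont hgd Z hZsub hZzero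
          have hmain := hIH Z' hZ'sub hZ'zero
          have hL : tbLam x0 x1 B (q + 1) c = tbLam x0 x1 B q c' + 1 := by
            rw [tbLam, if_pos h0]
          have hR : tbRho x0 x1 B (q + 1) c = 0 := by
            rw [tbRho, if_neg h1]
          omega
        · -- only x1 is a zero
          set Z : Finset ℝ := insert x1 z with hZdef
          have hZsub : ↑Z ⊆ Set.Icc x0 x1 := by
            rw [hZdef]; push_cast
            intro t ht
            rcases ht with h | h
            · rw [h]; exact ⟨le_of_lt hx, le_rfl⟩
            · exact hzIcc h
          have hZzero : ∀ t ∈ Z, g t = 0 := by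
            intro t ht
            rcases Finset.mem_insert.mp ht with h | h
            · rw [h, hgx1, h1]
            · exact hgz t h
          have hZcard : Z.card = z.card + 1 := Finset.card_insert_of_notMem hx1z
          obtain ⟨Z', hZ'sub, hZ'zero, hZ'card, -⟩ := tb_rolle hgcont hgd Z hZsub hZzero
          have hmain := hIH Z' hZ'sub hZ'zero
          have hL : tbLam x0 x1 B (q + 1) c = 0 := by
            rw [tbLam, if_neg h0]
          have hR : tbRho x0 x1 B (q + 1) c = tbRho x0 x1 B q c' + 1 := by
            rw [tbRho, if_pos h1]
          omega
        · -- no endpoint zeros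
          obtain ⟨Z', hZ'sub, hZ'zero, hZ'card, -⟩ := tb_rolle hgcont hgd z hzIcc hgz
          have hmain := hIH Z' hZ'sub hZ'zero
          have hL : tbLam x0 x1 B (q + 1) c = 0 := by
            rw [tbLam, if_neg h0]
          have hR : tbRho x0 x1 B (q + 1) c = 0 := by
            rw [tbRho, if_neg h1]
          omega

theorem tb_lam_eq (hb_pos : ∀ q < p, ∀ j ≤ q, 0 < ∫ y in x0..x1, B j q y) :
    ∀ l q (c : ℕ → ℝ), l ≤ q → q ≤ p → (∀ k < l, c k = 0) → c l ≠ 0 →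
      tbLam x0 x1 B q c = l := by
  intro l
  induction l with
  | zero =>
      intro q c _ _ _ hcl
      cases q with
      | zero => rfl
      | succ Q => rw [tbLam, if_neg hcl]
  | succ l IH =>
      intro q c hlq hq hzero hcl
      cases q with
      | zero => omega
      | succ Q =>
          have h0 : c 0 = 0 := hzero 0 (Nat.succ_pos l)
          rw [tbLam, if_pos h0]
          have hQp : Q < p := lt_of_lt_of_le (Nat.lt_succ_self Q) hq
          have hlQ : l ≤ Q := by omega
          have hres := IH Q (tbD x0 x1 B Q c) hlQ (le_of_lt hQp) ?_ ?_
          · rw [hres]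
          · intro k hk
            rw [tbD, hzero k (by omega), hzero (k + 1) (by omega), sub_self, zero_div]
          · rw [tbD, hzero l (Nat.lt_succ_self l)]
            rw [sub_zero]
            exact div_ne_zero hcl (hb_pos Q hQp l hlQ).ne'

theorem tb_rho_eq (hb_pos : ∀ q < p, ∀ j ≤ q, 0 < ∫ y in x0..x1, B j q y) :
    ∀ q r (c : ℕ → ℝ), r ≤ q → q ≤ p → (∀ k, r < k → c k = 0) → c r ≠ 0 →
      tbRho x0 x1 B q c = q - r := by
  intro q
  induction q with
  | zero =>
      intro r c hrq _ _ _
      simp [tbRho]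
  | succ Q IH =>
      intro r c hrq hq hzero hcr
      by_cases hr : r = Q + 1
      · rw [tbRho, if_neg (hr ▸ hcr)]
        omega
      · have hrQ : r ≤ Q := by omega
        have hQp : Q < p := lt_of_lt_of_le (Nat.lt_succ_self Q) hq
        have hcq1 : c (Q + 1) = 0 := hzero (Q + 1) (by omega)
        rw [tbRho, if_pos hcq1]
        have hres := IH r (tbD x0 x1 B Q c) hrQ (le_of_lt hQp) ?_ ?_
        · rw [hres]; omega
        · intro k hk
          rw [tbD, hzero k hk, hzero (k + 1) (by omega), sub_self, zero_div]
        · rw [tbD, hzero (r + 1) (by omega), zero_sub]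
          exact div_ne_zero (neg_ne_zero.mpr hcr) (hb_pos Q hQp r hrQ).ne'

/-- Positivity just to the right of `x0`. -/
theorem tb_near (hx : x0 < x1)
    (hw_pos : ∀ j ≤ p, ∀ x ∈ Set.Icc x0 x1, 0 < w j x)
    (hB_cont : ∀ q ≤ p, ∀ j ≤ q, ContinuousOn (B j q) (Set.Icc x0 x1))
    (hb_pos : ∀ q < p, ∀ j ≤ q, 0 < ∫ y in x0..x1, B j q y)
    (hrec0 : ∀ x ∈ Set.Icc x0 x1, B 0 0 x = w p x)
    (hrec_first : ∀ q < p, ∀ x ∈ Set.Icc x0 x1,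
      B 0 (q + 1) x
        = w (p - (q + 1)) x * (1 - ∫ y in x0..x, B 0 q y / (∫ z in x0..x1, B 0 q z)))
    (hrec_mid : ∀ q < p, ∀ j, 0 < j → j < q + 1 → ∀ x ∈ Set.Icc x0 x1,
      B j (q + 1) x
        = w (p - (q + 1)) x *
            ∫ y in x0..x, (B (j - 1) q y / (∫ z in x0..x1, B (j - 1) q z)
              - B j q y / (∫ z in x0..x1, B j q z)))
    (hrec_last : ∀ q < p, ∀ x ∈ Set.Icc x0 x1,
      B (q + 1) (q + 1) x
        = w (p - (q + 1)) x * ∫ y in x0..x, B q q y / (∫ z in x0..x1, B q q z)) :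
    ∀ l q (c : ℕ → ℝ), l ≤ q → q ≤ p → (∀ k < l, c k = 0) → 0 < c l →
      ∃ ε > 0, ∀ x, x0 < x → x < x0 + ε → x ≤ x1 → 0 < tbS B q c x := by
  intro l
  induction l with
  | zero =>
      intro q c _ hq _ hcl
      have hx0I : x0 ∈ Set.Icc x0 x1 := ⟨le_rfl, le_of_lt hx⟩
      have hpos0 : 0 < tbS B q c x0 := by
        cases q with
        | zero =>
            simp only [tbS, zero_add, Finset.range_one, Finset.sum_singleton]
            rw [hrec0 x0 hx0I]
            exact mul_pos hcl (hw_pos p le_rfl x0 hx0I)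
        | succ Q =>
            have hQp : Q < p := hq
            rw [tb_struct hx hB_cont hb_pos hrec_first hrec_mid hrec_last hQp c le_rfl
              (le_of_lt hx)]
            rw [intervalIntegral.integral_same, add_zero]
            exact mul_pos (hw_pos _ (Nat.sub_le p (Q + 1)) x0 hx0I) hcl
      have hcont : ContinuousWithinAt (tbS B q c) (Set.Icc x0 x1) x0 :=
        (tb_contS hB_cont hq c) x0 hx0I
      have hev : ∀ᶠ y in 𝓝[Set.Icc x0 x1] x0, 0 < tbS B q c y :=
        hcont.eventually (eventually_gt_nhds hpos0)
      have hev' : {y | 0 < tbS B q c y} ∈ 𝓝[Set.Icc x0 x1] x0 := hev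
      obtain ⟨ε, hε, hball⟩ := Metric.mem_nhdsWithin_iff.mp hev'
      refine ⟨ε, hε, fun x hx1' hx2' hx3' => ?_⟩
      apply hball
      constructor
      · rw [Metric.mem_ball, Real.dist_eq, abs_of_pos (by linarith)]
        linarith
      · exact ⟨le_of_lt hx1', hx3'⟩
  | succ l IH =>
      intro q c hlq hq hzero hcl
      cases q with
      | zero => omega
      | succ Q =>
          have hQp : Q < p := hq
          have h0 : c 0 = 0 := hzero 0 (Nat.succ_pos l)
          set c' := tbD x0 x1 B Q c with hc'def
          have hc'zero : ∀ k < l, c' k = 0 := by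
            intro k hk
            rw [hc'def, tbD, hzero k (by omega), hzero (k + 1) (by omega), sub_self, zero_div]
          have hc'l : 0 < c' l := by
            rw [hc'def, tbD, hzero l (Nat.lt_succ_self l), sub_zero]
            exact div_pos hcl (hb_pos Q hQp l (by omega))
          obtain ⟨ε, hε, hpos⟩ := IH Q c' (by omega) (le_of_lt hQp) hc'zero hc'l
          refine ⟨ε, hε, fun x hx1' hx2' hx3' => ?_⟩
          have hxI : x ∈ Set.Icc x0 x1 := ⟨le_of_lt hx1', hx3'⟩
          rw [tb_struct hx hB_cont hb_pos hrec_first hrec_mid hrec_last hQp c hxI.1 hxI.2,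
            ← hc'def, h0, zero_add]
          refine mul_pos (hw_pos _ (Nat.sub_le p (Q + 1)) x hxI) ?_
          apply intervalIntegral.intervalIntegral_pos_of_pos_on
          · exact tb_intS hB_cont (le_of_lt hQp) c' le_rfl (le_of_lt hx1') hx3'
          · intro t ht
            exact hpos t ht.1 (lt_trans ht.2 hx2') (le_of_lt (lt_of_lt_of_le ht.2 hx3'))
          · exact hx1'

/-- Strict positivity on the open interval. -/
theorem tb_posIoo (hx : x0 < x1)
    (hw_pos : ∀ j ≤ p, ∀ x ∈ Set.Icc x0 x1, 0 < w j x)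
    (hB_cont : ∀ q ≤ p, ∀ j ≤ q, ContinuousOn (B j q) (Set.Icc x0 x1))
    (hb_pos : ∀ q < p, ∀ j ≤ q, 0 < ∫ y in x0..x1, B j q y)
    (hrec0 : ∀ x ∈ Set.Icc x0 x1, B 0 0 x = w p x)
    (hrec_first : ∀ q < p, ∀ x ∈ Set.Icc x0 x1,
      B 0 (q + 1) x
        = w (p - (q + 1)) x * (1 - ∫ y in x0..x, B 0 q y / (∫ z in x0..x1, B 0 q z)))
    (hrec_mid : ∀ q < p, ∀ j, 0 < j → j < q + 1 → ∀ x ∈ Set.Icc x0 x1,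
      B j (q + 1) x
        = w (p - (q + 1)) x *
            ∫ y in x0..x, (B (j - 1) q y / (∫ z in x0..x1, B (j - 1) q z)
              - B j q y / (∫ z in x0..x1, B j q z)))
    (hrec_last : ∀ q < p, ∀ x ∈ Set.Icc x0 x1,
      B (q + 1) (q + 1) x
        = w (p - (q + 1)) x * ∫ y in x0..x, B q q y / (∫ z in x0..x1, B q q z))
    {q j : ℕ} (hq : q ≤ p) (hj : j ≤ q) {x : ℝ} (hxI : x ∈ Set.Ioo x0 x1) :
    0 < B j q x := by
  set δ : ℕ → ℝ := fun k => if k = j then (1:ℝ) else 0 with hδdef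
  have hSB : ∀ y : ℝ, tbS B q δ y = B j q y := by
    intro y
    rw [tbS]
    rw [Finset.sum_eq_single j]
    · simp [hδdef]
    · intro i _ hij
      simp [hδdef, hij]
    · intro hmem
      exact absurd (Finset.mem_range.mpr (Nat.lt_succ_of_le hj)) hmem
  have hδlow : ∀ k < j, δ k = 0 := by
    intro k hk
    simp [hδdef, Nat.ne_of_lt hk]
  have hδhigh : ∀ k, j < k → δ k = 0 := by
    intro k hk
    simp [hδdef, (Nat.ne_of_lt hk).symm]
  have hδj : δ j = 1 := by simp [hδdef]
  -- no zeros in the open interval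
  have hnozero : ∀ t ∈ Set.Ioo x0 x1, B j q t ≠ 0 := by
    intro t ht h0
    have hcz := tb_cz hx hw_pos hB_cont hb_pos hrec0 hrec_first hrec_mid hrec_last q hq δ
      ⟨j, hj, by rw [hδj]; norm_num⟩ {t} (by simpa using ht)
      (by intro s hs; rw [Finset.mem_singleton.mp hs, hSB]; exact h0)
    rw [tb_lam_eq hb_pos j q δ hj hq hδlow (by rw [hδj]; norm_num),
      tb_rho_eq hb_pos q j δ hj hq hδhigh (by rw [hδj]; norm_num)] at hcz
    simp at hcz
    omega
  -- positivity near x0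
  obtain ⟨ε, hε, hpos⟩ := tb_near hx hw_pos hB_cont hb_pos hrec0 hrec_first hrec_mid
    hrec_last j q δ hj hq hδlow (by rw [hδj]; norm_num)
  set xh := x0 + min ε (x1 - x0) / 2 with hxhdef
  have hxh1 : x0 < xh := by
    rw [hxhdef]
    have : 0 < min ε (x1 - x0) := lt_min hε (by linarith [hxI.1, hxI.2])
    linarith
  have hxh2 : xh < x0 + ε := by
    rw [hxhdef]
    have h1 : min ε (x1 - x0) ≤ ε := min_le_left _ _
    linarith
  have hxh3 : xh < x1 := by
    rw [hxhdef]
    have h1 : min ε (x1 - x0) ≤ x1 - x0 := min_le_right _ _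
    have h2 : 0 < x1 - x0 := by linarith
    linarith
  have hxhpos : 0 < B j q xh := by
    rw [← hSB]
    exact hpos xh hxh1 hxh2 (le_of_lt hxh3)
  by_contra hle
  push_neg at hle
  have hlt : B j q x < 0 :=
    lt_of_le_of_ne hle (hnozero x hxI)
  have hcont : ContinuousOn (B j q) (Set.Icc x0 x1) := hB_cont q hq j hj
  rcases lt_trichotomy xh x with hc | hc | hc
  · have hkey : (0:ℝ) ∈ Set.Ioo (B j q x) (B j q xh) := ⟨hlt, hxhpos⟩
    have := intermediate_value_Ioo' (le_of_lt hc)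
      (hcont.mono (Set.Icc_subset_Icc (le_of_lt hxh1) (le_of_lt hxI.2)))
    obtain ⟨t, htIoo, ht0⟩ := this hkey
    exact hnozero t ⟨lt_trans hxh1 htIoo.1, lt_trans htIoo.2 hxI.2⟩ ht0
  · rw [hc] at hxhpos; linarith
  · have hkey : (0:ℝ) ∈ Set.Ioo (B j q x) (B j q xh) := ⟨hlt, hxhpos⟩
    have := intermediate_value_Ioo (le_of_lt hc)
      (hcont.mono (Set.Icc_subset_Icc (le_of_lt hxI.1) (le_of_lt hxh3)))
    obtain ⟨t, htIoo, ht0⟩ := this hkey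
    exact hnozero t ⟨lt_trans hxI.1 htIoo.1, lt_trans htIoo.2 hxh3⟩ ht0

end TB

/-- Under the Tchebycheffian Bernstein integral recurrence hypotheses with positive
continuous weights `w_0 ≡ 1, w_1, …, w_p` on `[x_0, x_1]` and positive normalization
integrals, every Tchebycheffian Bernstein function is non-negative on the interval:
`B_{j,q}(x) ≥ 0` for all `0 ≤ j ≤ q ≤ p` and `x ∈ [x_0, x_1]`. -/
theorem tcheb_bernstein_nonneg
    (x0 x1 : ℝ) (hx : x0 < x1) (p : ℕ) (w : ℕ → ℝ → ℝ) (B : ℕ → ℕ → ℝ → ℝ)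
    (hw_cont : ∀ j ≤ p, ContinuousOn (w j) (Set.Icc x0 x1))
    (hw_pos : ∀ j ≤ p, ∀ x ∈ Set.Icc x0 x1, 0 < w j x)
    (hw0 : ∀ x ∈ Set.Icc x0 x1, w 0 x = 1)
    (hB_cont : ∀ q ≤ p, ∀ j ≤ q, ContinuousOn (B j q) (Set.Icc x0 x1))
    (hb_pos : ∀ q < p, ∀ j ≤ q, 0 < ∫ y in x0..x1, B j q y)
    (hrec0 : ∀ x ∈ Set.Icc x0 x1, B 0 0 x = w p x)
    (hrec_first : ∀ q < p, ∀ x ∈ Set.Icc x0 x1,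
      B 0 (q + 1) x
        = w (p - (q + 1)) x * (1 - ∫ y in x0..x, B 0 q y / (∫ z in x0..x1, B 0 q z)))
    (hrec_mid : ∀ q < p, ∀ j, 0 < j → j < q + 1 → ∀ x ∈ Set.Icc x0 x1,
      B j (q + 1) x
        = w (p - (q + 1)) x *
            ∫ y in x0..x, (B (j - 1) q y / (∫ z in x0..x1, B (j - 1) q z)
              - B j q y / (∫ z in x0..x1, B j q z)))
    (hrec_last : ∀ q < p, ∀ x ∈ Set.Icc x0 x1,
      B (q + 1) (q + 1) x
        = w (p - (q + 1)) x * ∫ y in x0..x, B q q y / (∫ z in x0..x1, B q q z)) :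
    ∀ q ≤ p, ∀ j ≤ q, ∀ x ∈ Set.Icc x0 x1, 0 ≤ B j q x := by
  intro q hq j hj x hxI
  have hx0I : x0 ∈ Set.Icc x0 x1 := ⟨le_rfl, le_of_lt hx⟩
  have hx1I : x1 ∈ Set.Icc x0 x1 := ⟨le_of_lt hx, le_rfl⟩
  by_cases hxx0 : x = x0
  · -- left endpoint
    subst hxx0
    cases q with
    | zero =>
        have hj0 : j = 0 := Nat.le_zero.mp hj
        subst hj0
        rw [hrec0 x hx0I]
        exact le_of_lt (hw_pos p le_rfl x hx0I)
    | succ Q =>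
        have hQp : Q < p := hq
        rcases j with _ | i
        · rw [hrec_first Q hQp x hx0I, intervalIntegral.integral_same, sub_zero, mul_one]
          exact le_of_lt (hw_pos _ (Nat.sub_le p (Q + 1)) x hx0I)
        · by_cases hiQ : i + 1 = Q + 1
          · rw [hiQ, hrec_last Q hQp x hx0I, intervalIntegral.integral_same, mul_zero]
          · have h := hrec_mid Q hQp (i + 1) (Nat.succ_pos i) (by omega) x hx0I
            rw [h, intervalIntegral.integral_same, mul_zero]
  by_cases hxx1 : x = x1
  · -- right endpoint
    subst hxx1
    cases q with
    | zero =>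
        have hj0 : j = 0 := Nat.le_zero.mp hj
        subst hj0
        rw [hrec0 x hx1I]
        exact le_of_lt (hw_pos p le_rfl x hx1I)
    | succ Q =>
        have hQp : Q < p := hq
        by_cases hjQ : j = Q + 1
        · subst hjQ
          rw [tb_valx1_last hx hb_pos hrec_last hQp]
          exact le_of_lt (hw_pos _ (Nat.sub_le p (Q + 1)) x hx1I)
        · rw [tb_valx1 hx hB_cont hb_pos hrec_first hrec_mid hQp j (by omega)]
  · -- interior
    have hxIoo : x ∈ Set.Ioo x0 x1 :=
      ⟨lt_of_le_of_ne hxI.1 (Ne.symm hxx0), lt_of_le_of_ne hxI.2 hxx1⟩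
    exact le_of_lt (tb_posIoo hx hw_pos hB_cont hb_pos hrec0 hrec_first hrec_mid hrec_last
      hq hj hxIoo)
end

section
/- With the Tchebycheffian Bernstein recursion hypotheses in force, and assuming additionally that each weight w_j is (p−j)-times continuously differentiable on [x_0, x_1], the top-level functions B_{0,p}, …, B_{p,p} satisfy the end-point conditions: B_{0,p}(x_0) = 1; B_{p,p}(x_1) = 1; for every 1 ≤ j ≤ p, the one-sided derivatives (within [x_0,x_1]) satisfy D^k B_{j,p}(x_0) = 0 for all 0 ≤ k ≤ j−1; and for every 0 ≤ j ≤ p−1, D^k B_{j,p}(x_1) = 0 for all 0 ≤ k ≤ p−j−1. -/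
open Set MeasureTheory intervalIntegral


private lemma prim_hasDeriv {x0 x1 : ℝ} {g : ℝ → ℝ} (hg : ContinuousOn g (Set.Icc x0 x1))
    {x : ℝ} (hx : x ∈ Set.Icc x0 x1) :
    HasDerivWithinAt (fun u => ∫ y in x0..u, g y) (g x) (Set.Icc x0 x1) x := by
  haveI : Fact (x ∈ Set.Icc x0 x1) := ⟨hx⟩
  refine intervalIntegral.integral_hasDerivWithinAt_right ?_ ?_ (hg x hx)
  · refine (hg.mono ?_).intervalIntegrable
    rw [Set.uIcc_of_le hx.1]
    exact Set.Icc_subset_Icc_right hx.2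
  · exact ⟨Set.Icc x0 x1, self_mem_nhdsWithin, hg.aestronglyMeasurable measurableSet_Icc⟩

private lemma prim_derivWithin {x0 x1 : ℝ} (hx01 : x0 < x1) {g : ℝ → ℝ}
    (hg : ContinuousOn g (Set.Icc x0 x1)) :
    Set.EqOn (derivWithin (fun u => ∫ y in x0..u, g y) (Set.Icc x0 x1)) g (Set.Icc x0 x1) :=
  fun x hx => (prim_hasDeriv hg hx).derivWithin ((uniqueDiffOn_Icc hx01) x hx)

private lemma prim_contDiffOn {x0 x1 : ℝ} (hx01 : x0 < x1) {g : ℝ → ℝ} {n : ℕ}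
    (hg : ContDiffOn ℝ n g (Set.Icc x0 x1)) :
    ContDiffOn ℝ (n + 1 : ℕ) (fun u => ∫ y in x0..u, g y) (Set.Icc x0 x1) := by
  have hgc : ContinuousOn g (Set.Icc x0 x1) := hg.continuousOn
  have hu := uniqueDiffOn_Icc hx01
  rw [Nat.cast_add, Nat.cast_one]
  rw [contDiffOn_succ_iff_derivWithin hu]
  refine ⟨fun x hx => ((prim_hasDeriv hgc hx).differentiableWithinAt), ?_, ?_⟩
  · intro h; exact absurd h (by simp)
  · exact hg.congr (prim_derivWithin hx01 hgc)

private lemma vanish_mul {s : Set ℝ} (hs : UniqueDiffOn ℝ s) {a : ℝ} (ha : a ∈ s) :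
    ∀ n : ℕ, ∀ f g : ℝ → ℝ, ContDiffOn ℝ n f s → ContDiffOn ℝ n g s →
    (∀ i ≤ n, iteratedDerivWithin i g s a = 0) →
    ∀ k ≤ n, iteratedDerivWithin k (fun x => f x * g x) s a = 0 := by
  intro n
  induction n with
  | zero =>
    intro f g hf hg hg0 k hk
    interval_cases k
    simp only [iteratedDerivWithin_zero]
    have := hg0 0 le_rfl
    simp only [iteratedDerivWithin_zero] at this
    rw [this, mul_zero]
  | succ n IH =>
    intro f g hf hg hg0 k hk
    match k with
    | 0 =>
      simp only [iteratedDerivWithin_zero]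
      have := hg0 0 (Nat.zero_le _)
      simp only [iteratedDerivWithin_zero] at this
      rw [this, mul_zero]
    | (m+1) =>
      have hone : (1 : WithTop ℕ∞) ≤ ((n:ℕ)+1 : ℕ) := by
        rw [Nat.cast_add, Nat.cast_one]
        exact le_add_self
      have hfd : DifferentiableOn ℝ f s := hf.differentiableOn (by exact_mod_cast Nat.succ_ne_zero n)
      have hgd : DifferentiableOn ℝ g s := hg.differentiableOn (by exact_mod_cast Nat.succ_ne_zero n)
      have heq : Set.EqOn (derivWithin (fun x => f x * g x) s)
          (fun x => derivWithin f s x * g x + f x * derivWithin g s x) s := by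
        intro y hy
        exact derivWithin_fun_mul (hfd y hy) (hgd y hy)
      rw [iteratedDerivWithin_succ',
        iteratedDerivWithin_congr heq ha]
      have hfC : ContDiffOn ℝ n f s := hf.of_succ
      have hgC : ContDiffOn ℝ n g s := hg.of_succ
      have hf'C : ContDiffOn ℝ n (derivWithin f s) s := hf.derivWithin hs le_rfl
      have hg'C : ContDiffOn ℝ n (derivWithin g s) s := hg.derivWithin hs le_rfl
      have hm : m ≤ n := Nat.succ_le_succ_iff.mp hk
      have t1 : iteratedDerivWithin m (fun x => derivWithin f s x * g x) s a = 0 :=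
        IH (derivWithin f s) g hf'C hgC (fun i hi => hg0 i (hi.trans (Nat.le_succ n))) m hm
      have t2 : iteratedDerivWithin m (fun x => f x * derivWithin g s x) s a = 0 := by
        refine IH f (derivWithin g s) hfC hg'C (fun i hi => ?_) m hm
        rw [← iteratedDerivWithin_succ']
        exact hg0 (i+1) (Nat.succ_le_succ hi)
      calc iteratedDerivWithin m
            (fun x => derivWithin f s x * g x + f x * derivWithin g s x) s a
          = iteratedDerivWithin m (fun x => derivWithin f s x * g x) s a
            + iteratedDerivWithin m (fun x => f x * derivWithin g s x) s a := by
            exact iteratedDerivWithin_add ha hs ((hf'C.of_le (by exact_mod_cast hm)).mul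
              (hgC.of_le (by exact_mod_cast hm)) a ha)
              ((hfC.of_le (by exact_mod_cast hm)).mul (hg'C.of_le (by exact_mod_cast hm)) a ha)
        _ = 0 := by rw [t1, t2, add_zero]

private lemma iter_div_const {s : Set ℝ} (hs : UniqueDiffOn ℝ s) {a : ℝ} (ha : a ∈ s)
    {f : ℝ → ℝ} {k : ℕ} (hf : ContDiffOn ℝ k f s) (c : ℝ) :
    iteratedDerivWithin k (fun y => f y / c) s a = iteratedDerivWithin k f s a / c := by
  have : Set.EqOn (fun y => f y / c) (fun y => c⁻¹ * f y) s := by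
    intro y _; simp [div_eq_inv_mul]
  rw [iteratedDerivWithin_congr this ha, iteratedDerivWithin_const_mul ha hs c⁻¹ (hf a ha),
    div_eq_inv_mul]

private lemma step_lemma {x0 x1 : ℝ} (hx : x0 < x1) {q : ℕ} {g Bnew W : ℝ → ℝ} (c : ℝ)
    (hg : ContDiffOn ℝ q g (Set.Icc x0 x1))
    (hW : ContDiffOn ℝ (q + 1 : ℕ) W (Set.Icc x0 x1))
    (hBeq : Set.EqOn Bnew (fun x => W x * (c + ∫ y in x0..x, g y)) (Set.Icc x0 x1)) :
    ContDiffOn ℝ (q + 1 : ℕ) Bnew (Set.Icc x0 x1) ∧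
    ∀ a ∈ Set.Icc x0 x1, ∀ k ≤ q + 1,
      (c + ∫ y in x0..a, g y) = 0 →
      (∀ m, m + 1 ≤ k → iteratedDerivWithin m g (Set.Icc x0 x1) a = 0) →
      iteratedDerivWithin k Bnew (Set.Icc x0 x1) a = 0 := by
  have hs := uniqueDiffOn_Icc hx
  set s := Set.Icc x0 x1 with hsdef
  set F : ℝ → ℝ := fun u => ∫ y in x0..u, g y with hF
  have hFC : ContDiffOn ℝ (q + 1 : ℕ) F s := prim_contDiffOn hx hg
  have hHC : ContDiffOn ℝ (q + 1 : ℕ) (fun x => c + F x) s := contDiffOn_const.add hFC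
  constructor
  · exact (hW.mul hHC).congr hBeq
  · intro a ha k hk hH0 hgvan
    rw [iteratedDerivWithin_congr hBeq ha]
    refine vanish_mul hs ha k W (fun x => c + F x)
      (hW.of_le (by exact_mod_cast hk)) (hHC.of_le (by exact_mod_cast hk)) ?_ k le_rfl
    intro i hi
    match i with
    | 0 => simpa using hH0
    | (m+1) =>
      rw [iteratedDerivWithin_succ']
      have heq : Set.EqOn (derivWithin (fun x => c + F x) s) g s := by
        intro y hy
        rw [derivWithin_const_add]
        exact prim_derivWithin hx hg.continuousOn hy
      rw [iteratedDerivWithin_congr heq ha]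
      exact hgvan m hi


/-- Under the Tchebycheffian Bernstein integral recurrence hypotheses, with each weight
`w_j` additionally `(p−j)`-times continuously differentiable on `[x_0, x_1]`, the
top-level functions satisfy the end-point conditions: `B_{0,p}(x_0) = 1`,
`B_{p,p}(x_1) = 1`, `D^k B_{j,p}(x_0) = 0` for `1 ≤ j ≤ p`, `0 ≤ k ≤ j−1`, and
`D^k B_{j,p}(x_1) = 0` for `0 ≤ j ≤ p−1`, `0 ≤ k ≤ p−j−1` (one-sided derivatives
within `[x_0, x_1]`). -/
theorem tcheb_bernstein_endpoint_conditions
    (x0 x1 : ℝ) (hx : x0 < x1) (p : ℕ) (w : ℕ → ℝ → ℝ) (B : ℕ → ℕ → ℝ → ℝ)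
    (hw_cont : ∀ j ≤ p, ContinuousOn (w j) (Set.Icc x0 x1))
    (hw_pos : ∀ j ≤ p, ∀ x ∈ Set.Icc x0 x1, 0 < w j x)
    (hw0 : ∀ x ∈ Set.Icc x0 x1, w 0 x = 1)
    (hw_smooth : ∀ j ≤ p, ContDiffOn ℝ (↑(p - j)) (w j) (Set.Icc x0 x1))
    (hB_cont : ∀ q ≤ p, ∀ j ≤ q, ContinuousOn (B j q) (Set.Icc x0 x1))
    (hb_pos : ∀ q < p, ∀ j ≤ q, 0 < ∫ y in x0..x1, B j q y)
    (hrec0 : ∀ x ∈ Set.Icc x0 x1, B 0 0 x = w p x)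
    (hrec_first : ∀ q < p, ∀ x ∈ Set.Icc x0 x1,
      B 0 (q + 1) x
        = w (p - (q + 1)) x * (1 - ∫ y in x0..x, B 0 q y / (∫ z in x0..x1, B 0 q z)))
    (hrec_mid : ∀ q < p, ∀ j, 0 < j → j < q + 1 → ∀ x ∈ Set.Icc x0 x1,
      B j (q + 1) x
        = w (p - (q + 1)) x *
            ∫ y in x0..x, (B (j - 1) q y / (∫ z in x0..x1, B (j - 1) q z)
              - B j q y / (∫ z in x0..x1, B j q z)))
    (hrec_last : ∀ q < p, ∀ x ∈ Set.Icc x0 x1,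
      B (q + 1) (q + 1) x
        = w (p - (q + 1)) x * ∫ y in x0..x, B q q y / (∫ z in x0..x1, B q q z)) :
    B 0 p x0 = 1 ∧ B p p x1 = 1 ∧
    (∀ j, 1 ≤ j → j ≤ p → ∀ k < j,
        iteratedDerivWithin k (B j p) (Set.Icc x0 x1) x0 = 0) ∧
    (∀ j < p, ∀ k < p - j,
        iteratedDerivWithin k (B j p) (Set.Icc x0 x1) x1 = 0) := by
  
  have hs := uniqueDiffOn_Icc hx
  have hx0 : x0 ∈ Set.Icc x0 x1 := Set.left_mem_Icc.mpr hx.le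
  have hx1 : x1 ∈ Set.Icc x0 x1 := Set.right_mem_Icc.mpr hx.le
  -- integrability of the level-q functions
  have hint : ∀ q ≤ p, ∀ j ≤ q, IntervalIntegrable (B j q) volume x0 x1 := by
    intro q hq j hj
    refine ((hB_cont q hq j hj).mono ?_).intervalIntegrable
    rw [Set.uIcc_of_le hx.le]
  -- the key induction
  have key : ∀ q, q ≤ p → ∀ j, j ≤ q →
      ContDiffOn ℝ (q : ℕ) (B j q) (Set.Icc x0 x1) ∧
      (∀ k < j, iteratedDerivWithin k (B j q) (Set.Icc x0 x1) x0 = 0) ∧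
      (∀ k < q - j, iteratedDerivWithin k (B j q) (Set.Icc x0 x1) x1 = 0) := by
    intro q
    induction q with
    | zero =>
      intro _ j hj
      interval_cases j
      refine ⟨?_, by omega, by omega⟩
      rw [Nat.cast_zero, contDiffOn_zero]
      exact hB_cont 0 (Nat.zero_le p) 0 le_rfl
    | succ q IH =>
      intro hq1 j hj
      have hqp : q < p := by omega
      have IHq := IH (by omega)
      have hw1 : ContDiffOn ℝ (q + 1 : ℕ) (w (p - (q + 1))) (Set.Icc x0 x1) := by
        have := hw_smooth (p - (q + 1)) (by omega)
        rwa [show p - (p - (q + 1)) = q + 1 by omega] at this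
      rcases Nat.eq_zero_or_pos j with rfl | hjpos
      · -- j = 0
        set b : ℝ := ∫ z in x0..x1, B 0 q z with hb
        have hbne : b ≠ 0 := (hb_pos q hqp 0 (Nat.zero_le q)).ne'
        set g : ℝ → ℝ := fun y => -(B 0 q y / b) with hg
        have hgC : ContDiffOn ℝ (q : ℕ) g (Set.Icc x0 x1) :=
          ((IHq 0 (Nat.zero_le q)).1.div_const b).neg
        have hBeq : Set.EqOn (B 0 (q + 1))
            (fun x => w (p - (q + 1)) x * ((1 : ℝ) + ∫ y in x0..x, g y)) (Set.Icc x0 x1) := by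
          intro x hxm
          rw [hrec_first q hqp x hxm]
          simp [hg, intervalIntegral.integral_neg, sub_eq_add_neg]
          exact Or.inl rfl
        obtain ⟨hsm, hvan⟩ := step_lemma hx (1 : ℝ) hgC hw1 hBeq
        refine ⟨hsm, by omega, ?_⟩
        intro k hk
        refine hvan x1 hx1 k (by omega) ?_ ?_
        · have : (∫ y in x0..x1, g y) = -1 := by
            rw [hg]
            rw [intervalIntegral.integral_neg, intervalIntegral.integral_div, ← hb,
              div_self hbne]
          rw [this]; ring
        · intro m hm
          have hmq : m < q - 0 := by omega
          have hC : ContDiffOn ℝ (m : ℕ) (B 0 q) (Set.Icc x0 x1) :=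
            (IHq 0 (Nat.zero_le q)).1.of_le (by exact_mod_cast (by omega : m ≤ q))
          rw [hg]
          rw [iteratedDerivWithin_fun_neg, iter_div_const hs hx1 hC b,
            (IHq 0 (Nat.zero_le q)).2.2 m hmq]
          simp
      · rcases eq_or_lt_of_le hj with rfl | hjlt
        · -- j = q + 1
          set b : ℝ := ∫ z in x0..x1, B q q z with hb
          set g : ℝ → ℝ := fun y => B q q y / b with hg
          have hgC : ContDiffOn ℝ (q : ℕ) g (Set.Icc x0 x1) :=
            (IHq q le_rfl).1.div_const b
          have hBeq : Set.EqOn (B (q + 1) (q + 1))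
              (fun x => w (p - (q + 1)) x * ((0 : ℝ) + ∫ y in x0..x, g y)) (Set.Icc x0 x1) := by
            intro x hxm
            rw [hrec_last q hqp x hxm]
            simp [hg]
            exact Or.inl rfl
          obtain ⟨hsm, hvan⟩ := step_lemma hx (0 : ℝ) hgC hw1 hBeq
          refine ⟨hsm, ?_, by omega⟩
          intro k hk
          refine hvan x0 hx0 k (by omega) (by simp) ?_
          intro m hm
          have hmq : m < q := by omega
          have hC : ContDiffOn ℝ (m : ℕ) (B q q) (Set.Icc x0 x1) :=
            (IHq q le_rfl).1.of_le (by exact_mod_cast (by omega : m ≤ q))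
          rw [hg, iter_div_const hs hx0 hC b, (IHq q le_rfl).2.1 m hmq]
          simp
        · -- 0 < j < q + 1
          obtain ⟨j', rfl⟩ : ∃ j', j = j' + 1 := ⟨j - 1, by omega⟩
          have hj'q : j' + 1 ≤ q := by omega
          set b1 : ℝ := ∫ z in x0..x1, B j' q z with hb1
          set b2 : ℝ := ∫ z in x0..x1, B (j' + 1) q z with hb2
          have hb1ne : b1 ≠ 0 := (hb_pos q hqp j' (by omega)).ne'
          have hb2ne : b2 ≠ 0 := (hb_pos q hqp (j' + 1) (by omega)).ne'
          set g : ℝ → ℝ := fun y => B j' q y / b1 - B (j' + 1) q y / b2 with hg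
          have hC1 := (IHq j' (by omega)).1
          have hC2 := (IHq (j' + 1) (by omega)).1
          have hgC : ContDiffOn ℝ (q : ℕ) g (Set.Icc x0 x1) :=
            (hC1.div_const b1).sub (hC2.div_const b2)
          have hBeq : Set.EqOn (B (j' + 1) (q + 1))
              (fun x => w (p - (q + 1)) x * ((0 : ℝ) + ∫ y in x0..x, g y)) (Set.Icc x0 x1) := by
            intro x hxm
            rw [hrec_mid q hqp (j' + 1) (Nat.succ_pos _) (by omega) x hxm]
            simp [hg]
            exact Or.inl rfl
          obtain ⟨hsm, hvan⟩ := step_lemma hx (0 : ℝ) hgC hw1 hBeq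
          have iterg : ∀ a ∈ Set.Icc x0 x1, ∀ m ≤ q,
              iteratedDerivWithin m g (Set.Icc x0 x1) a
                = iteratedDerivWithin m (B j' q) (Set.Icc x0 x1) a / b1
                  - iteratedDerivWithin m (B (j' + 1) q) (Set.Icc x0 x1) a / b2 := by
            intro a ha m hm
            have hmC1 : ContDiffOn ℝ (m : ℕ) (fun y => B j' q y / b1) (Set.Icc x0 x1) :=
              (hC1.of_le (by exact_mod_cast hm)).div_const b1
            have hmC2 : ContDiffOn ℝ (m : ℕ) (fun y => B (j' + 1) q y / b2) (Set.Icc x0 x1) :=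
              (hC2.of_le (by exact_mod_cast hm)).div_const b2
            rw [hg]
            rw [show (fun y => B j' q y / b1 - B (j' + 1) q y / b2)
                = (fun y => B j' q y / b1) - (fun y => B (j' + 1) q y / b2) from rfl,
              iteratedDerivWithin_sub ha hs (hmC1 a ha) (hmC2 a ha),
              iter_div_const hs ha (hC1.of_le (by exact_mod_cast hm)) b1,
              iter_div_const hs ha (hC2.of_le (by exact_mod_cast hm)) b2]
          constructor
          · exact hsm
          constructor
          · intro k hk
            refine hvan x0 hx0 k (by omega) (by simp) ?_
            intro m hm
            rw [iterg x0 hx0 m (by omega),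
              (IHq j' (by omega)).2.1 m (by omega),
              (IHq (j' + 1) (by omega)).2.1 m (by omega)]
            simp
          · intro k hk
            refine hvan x1 hx1 k (by omega) ?_ ?_
            · have : (∫ y in x0..x1, g y) = 0 := by
                rw [hg]
                rw [intervalIntegral.integral_sub
                    ((hint q (by omega) j' (by omega)).div_const b1)
                    ((hint q (by omega) (j' + 1) (by omega)).div_const b2),
                  intervalIntegral.integral_div, intervalIntegral.integral_div,
                  ← hb1, ← hb2, div_self hb1ne, div_self hb2ne, sub_self]
              rw [this]; ring
            · intro m hm
              rw [iterg x1 hx1 m (by omega),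
                (IHq j' (by omega)).2.2 m (by omega),
                (IHq (j' + 1) (by omega)).2.2 m (by omega)]
              simp
  -- now the four conclusions
  refine ⟨?_, ?_, ?_, ?_⟩
  · cases p with
    | zero => rw [hrec0 x0 hx0]; exact hw0 x0 hx0
    | succ q =>
      rw [hrec_first q (Nat.lt_succ_self q) x0 hx0]
      simp [Nat.sub_self, hw0 x0 hx0]
  · cases p with
    | zero => rw [hrec0 x1 hx1]; exact hw0 x1 hx1
    | succ q =>
      have hbne : (∫ z in x0..x1, B q q z) ≠ 0 :=
        (hb_pos q (Nat.lt_succ_self q) q le_rfl).ne'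
      rw [hrec_last q (Nat.lt_succ_self q) x1 hx1]
      rw [intervalIntegral.integral_div, div_self hbne, Nat.sub_self, hw0 x1 hx1, one_mul]
  · intro j hj1 hjp k hk
    exact (key p le_rfl j hjp).2.1 k hk
  · intro j hjp k hk
    exact (key p le_rfl j hjp.le).2.2 k hk
end

section
/- With the Tchebycheffian Bernstein recursion hypotheses in force, and assuming additionally that each weight w_j is (p−j)-times continuously differentiable on [x_0, x_1], the top-level Tchebycheffian Bernstein functions B_{0,p}, …, B_{p,p} are linearly independent as functions on [x_0, x_1]: if c_0, …, c_p are reals with ∑_{j=0}^{p} c_j B_{j,p}(x) = 0 for all x ∈ [x_0, x_1], then c_0 = ⋯ = c_p = 0. -/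
open MeasureTheory intervalIntegral Set

open MeasureTheory intervalIntegral Set

-- continuous function whose integrals from x0 all vanish is never positive on the interval
lemma tb_not_pos {x0 x1 : ℝ} (hx : x0 < x1) {g : ℝ → ℝ}
    (hg : ContinuousOn g (Set.Icc x0 x1))
    (hG : ∀ x ∈ Set.Icc x0 x1, (∫ y in x0..x, g y) = 0) :
    ∀ x ∈ Set.Icc x0 x1, ¬ 0 < g x := by
  intro x hxm hpos
  have hev : {y | 0 < g y} ∈ nhdsWithin x (Set.Icc x0 x1) := hg x hxm (Ioi_mem_nhds hpos)
  rw [Metric.mem_nhdsWithin_iff] at hev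
  obtain ⟨ε, hε, hsub⟩ := hev
  set a := max x0 (x - ε/2) with ha
  set b := min x1 (x + ε/2) with hbdef
  have hxm1 := hxm.1
  have hxm2 := hxm.2
  have hab : a < b := max_lt (lt_min hx (by linarith)) (lt_min (by linarith) (by linarith))
  have haI : a ∈ Set.Icc x0 x1 := ⟨le_max_left _ _, max_le hx.le (by linarith)⟩
  have hbI : b ∈ Set.Icc x0 x1 := ⟨le_min hx.le (by linarith), min_le_left _ _⟩
  have hIoo : ∀ y ∈ Set.Ioo a b, 0 < g y := by
    intro y hy
    have h1 : a ≤ y := hy.1.le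
    have h2 : y ≤ b := hy.2.le
    have h3 : x - ε/2 ≤ y := le_trans (le_max_right _ _) h1
    have h4 : y ≤ x + ε/2 := le_trans h2 (min_le_right _ _)
    exact hsub ⟨by rw [Metric.mem_ball, Real.dist_eq, abs_lt]; constructor <;> linarith,
      ⟨le_trans haI.1 h1, le_trans h2 hbI.2⟩⟩
  have hmono : ∀ u ∈ Set.Icc x0 x1, ∀ v ∈ Set.Icc x0 x1, u ≤ v →
      IntervalIntegrable g volume u v := by
    intro u hu v hv huv
    refine (hg.mono ?_).intervalIntegrable
    rw [Set.uIcc_of_le huv]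
    exact Set.Icc_subset_Icc hu.1 hv.2
  have hpos' : 0 < ∫ y in a..b, g y :=
    intervalIntegral_pos_of_pos_on (hmono a haI b hbI hab.le) hIoo hab
  have hzero : (∫ y in x0..b, g y) - (∫ y in x0..a, g y) = ∫ y in a..b, g y :=
    integral_interval_sub_left (hmono x0 ⟨le_refl _, hx.le⟩ b hbI hbI.1)
      (hmono x0 ⟨le_refl _, hx.le⟩ a haI haI.1)
  rw [hG b hbI, hG a haI] at hzero
  linarith

lemma tb_zero_of_integral {x0 x1 : ℝ} (hx : x0 < x1) {g : ℝ → ℝ}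
    (hg : ContinuousOn g (Set.Icc x0 x1))
    (hG : ∀ x ∈ Set.Icc x0 x1, (∫ y in x0..x, g y) = 0) :
    ∀ x ∈ Set.Icc x0 x1, g x = 0 := by
  intro x hxm
  have h1 := tb_not_pos hx hg hG x hxm
  have h2 := tb_not_pos hx (g := fun y => -g y) hg.neg
    (fun y hy => by rw [intervalIntegral.integral_neg, hG y hy, neg_zero]) x hxm
  simp only [Left.nonneg_neg_iff, not_lt] at h2
  simp only [not_lt] at h1
  exact le_antisymm h1 (by simpa using h2)

lemma tb_algebra (n : ℕ) (c : ℕ → ℝ) (I : ℕ → ℝ) (Bv : ℕ → ℝ)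
    (hfirst : Bv 0 = 1 - I 0)
    (hmid : ∀ j < n, Bv (j + 1) = I j - I (j + 1))
    (hlast : Bv (n + 1) = I n) :
    ∑ j ∈ Finset.range (n + 2), c j * Bv j
      = c 0 + ∑ j ∈ Finset.range (n + 1), (c (j + 1) - c j) * I j := by
  have e1 : ∑ j ∈ Finset.range (n + 2), c j * Bv j
      = (∑ j ∈ Finset.range (n + 1), c j * Bv j) + c (n + 1) * Bv (n + 1) :=
    Finset.sum_range_succ _ _
  have e2 : ∑ j ∈ Finset.range (n + 1), c j * Bv j
      = (∑ j ∈ Finset.range n, c (j + 1) * Bv (j + 1)) + c 0 * Bv 0 :=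
    Finset.sum_range_succ' _ _
  have e3 : ∑ j ∈ Finset.range n, c (j + 1) * Bv (j + 1)
      = ∑ j ∈ Finset.range n, c (j + 1) * (I j - I (j + 1)) :=
    Finset.sum_congr rfl fun j hj => by rw [hmid j (Finset.mem_range.mp hj)]
  have htel : ∑ j ∈ Finset.range n, (c (j + 1) * I (j + 1) - c j * I j)
      = c n * I n - c 0 * I 0 := Finset.sum_range_sub (fun k => c k * I k) n
  have hsplit : ∑ j ∈ Finset.range n, (c (j + 1) - c j) * I j
      = (∑ j ∈ Finset.range n, c (j + 1) * (I j - I (j + 1))) + (c n * I n - c 0 * I 0) := by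
    rw [← htel, ← Finset.sum_add_distrib]
    exact Finset.sum_congr rfl fun j _ => by ring
  rw [e1, e2, e3, hfirst, hlast, Finset.sum_range_succ, hsplit]
  ring

lemma tb_aux (x0 x1 : ℝ) (hx : x0 < x1) :
    ∀ (p : ℕ) (w : ℕ → ℝ → ℝ) (B : ℕ → ℕ → ℝ → ℝ),
      (∀ j ≤ p, ContinuousOn (w j) (Set.Icc x0 x1)) →
      (∀ j ≤ p, ∀ x ∈ Set.Icc x0 x1, 0 < w j x) →
      (∀ x ∈ Set.Icc x0 x1, w 0 x = 1) →
      (∀ q ≤ p, ∀ j ≤ q, ContinuousOn (B j q) (Set.Icc x0 x1)) →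
      (∀ q < p, ∀ j ≤ q, 0 < ∫ y in x0..x1, B j q y) →
      (∀ x ∈ Set.Icc x0 x1, B 0 0 x = w p x) →
      (∀ q < p, ∀ x ∈ Set.Icc x0 x1,
        B 0 (q + 1) x
          = w (p - (q + 1)) x * (1 - ∫ y in x0..x, B 0 q y / (∫ z in x0..x1, B 0 q z))) →
      (∀ q < p, ∀ j, 0 < j → j < q + 1 → ∀ x ∈ Set.Icc x0 x1,
        B j (q + 1) x
          = w (p - (q + 1)) x *
              ∫ y in x0..x, (B (j - 1) q y / (∫ z in x0..x1, B (j - 1) q z)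
                - B j q y / (∫ z in x0..x1, B j q z))) →
      (∀ q < p, ∀ x ∈ Set.Icc x0 x1,
        B (q + 1) (q + 1) x
          = w (p - (q + 1)) x * ∫ y in x0..x, B q q y / (∫ z in x0..x1, B q q z)) →
      ∀ c : ℕ → ℝ,
        (∀ x ∈ Set.Icc x0 x1, ∑ j ∈ Finset.range (p + 1), c j * B j p x = 0) →
        ∀ j ≤ p, c j = 0 := by
  intro p
  induction p with
  | zero =>
    intro w B _ _ hw0 _ _ hrec0 _ _ _ c hc j hj
    have hj0 : j = 0 := by omega
    subst hj0
    have h0 : x0 ∈ Set.Icc x0 x1 := ⟨le_refl _, hx.le⟩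
    have h := hc x0 h0
    rw [Finset.sum_range_one, hrec0 x0 h0, hw0 x0 h0, mul_one] at h
    exact h
  | succ n IH =>
    intro w B hw_cont hw_pos hw0 hB_cont hb_pos hrec0 hrec_first hrec_mid hrec_last c hc
    have hx0I : x0 ∈ Set.Icc x0 x1 := ⟨le_refl _, hx.le⟩
    have hw1 : ∀ x ∈ Set.Icc x0 x1, w 1 x ≠ 0 :=
      fun x hxm => (hw_pos 1 (by omega) x hxm).ne'
    have hsub : ∀ x ∈ Set.Icc x0 x1, Set.uIcc x0 x ⊆ Set.Icc x0 x1 := by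
      intro x hxm
      rw [Set.uIcc_of_le hxm.1]
      exact Set.Icc_subset_Icc le_rfl hxm.2
    have hcontBn : ∀ j ≤ n,
        ContinuousOn (fun y => B j n y / ∫ z in x0..x1, B j n z) (Set.Icc x0 x1) :=
      fun j hj => (hB_cont n (Nat.le_succ n) j hj).div_const _
    have hInt : ∀ j ≤ n, ∀ x ∈ Set.Icc x0 x1,
        IntervalIntegrable (fun y => B j n y / ∫ z in x0..x1, B j n z) volume x0 x :=
      fun j hj x hxm => ((hcontBn j hj).mono (hsub x hxm)).intervalIntegrable
    have hbpos : ∀ j ≤ n, 0 < ∫ z in x0..x1, B j n z :=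
      fun j hj => hb_pos n (Nat.lt_succ_self n) j hj
    -- main expansion
    have hval : ∀ x ∈ Set.Icc x0 x1,
        c 0 + ∑ j ∈ Finset.range (n + 1), (c (j + 1) - c j) *
          (∫ y in x0..x, B j n y / ∫ z in x0..x1, B j n z) = 0 := by
      intro x hxm
      have hfirst : B 0 (n + 1) x
          = 1 - ∫ y in x0..x, B 0 n y / ∫ z in x0..x1, B 0 n z := by
        have h := hrec_first n (Nat.lt_succ_self n) x hxm
        rwa [Nat.sub_self, hw0 x hxm, one_mul] at h
      have hlast : B (n + 1) (n + 1) x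
          = ∫ y in x0..x, B n n y / ∫ z in x0..x1, B n n z := by
        have h := hrec_last n (Nat.lt_succ_self n) x hxm
        rwa [Nat.sub_self, hw0 x hxm, one_mul] at h
      have hmid : ∀ j < n, B (j + 1) (n + 1) x
          = (∫ y in x0..x, B j n y / ∫ z in x0..x1, B j n z)
            - ∫ y in x0..x, B (j + 1) n y / ∫ z in x0..x1, B (j + 1) n z := by
        intro j hjn
        have h := hrec_mid n (Nat.lt_succ_self n) (j + 1) (Nat.succ_pos j) (by omega) x hxm
        rw [Nat.sub_self, hw0 x hxm, one_mul, Nat.add_sub_cancel] at h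
        rw [h, intervalIntegral.integral_sub (hInt j hjn.le x hxm) (hInt (j + 1) hjn x hxm)]
      have halg : (∑ j ∈ Finset.range (n + 1 + 1), c j * B j (n + 1) x)
          = c 0 + ∑ j ∈ Finset.range (n + 1), (c (j + 1) - c j) *
              (∫ y in x0..x, B j n y / ∫ z in x0..x1, B j n z) :=
        tb_algebra n c
          (fun j => ∫ y in x0..x, B j n y / ∫ z in x0..x1, B j n z)
          (fun j => B j (n + 1) x) hfirst hmid hlast
      rw [← halg]
      exact hc x hxm
    have hc0 : c 0 = 0 := by
      have h := hval x0 hx0I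
      simp only [intervalIntegral.integral_same, mul_zero, Finset.sum_const_zero,
        add_zero] at h
      exact h
    have hGzero : ∀ x ∈ Set.Icc x0 x1,
        (∫ y in x0..x, ∑ j ∈ Finset.range (n + 1),
          (c (j + 1) - c j) * (B j n y / ∫ z in x0..x1, B j n z)) = 0 := by
      intro x hxm
      rw [intervalIntegral.integral_finset_sum
        (fun j hj => (hInt j (Nat.lt_succ_iff.mp (Finset.mem_range.mp hj)) x hxm).const_mul _)]
      simp only [intervalIntegral.integral_const_mul]
      have h := hval x hxm
      rw [hc0, zero_add] at h
      exact h
    have hg0 : ∀ y ∈ Set.Icc x0 x1,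
        ∑ j ∈ Finset.range (n + 1),
          (c (j + 1) - c j) * (B j n y / ∫ z in x0..x1, B j n z) = 0 := by
      refine tb_zero_of_integral hx ?_ hGzero
      exact continuousOn_finset_sum _ fun j hj =>
        continuousOn_const.mul (hcontBn j (Nat.lt_succ_iff.mp (Finset.mem_range.mp hj)))
    -- set up the lower-level family for the induction hypothesis
    set w' : ℕ → ℝ → ℝ := fun j => if j = 0 then (fun _ => (1 : ℝ)) else w (j + 1) with hw'
    set B' : ℕ → ℕ → ℝ → ℝ :=
      fun j q => if q = n then (fun x => B j n x / w 1 x) else B j q with hB'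
    set d : ℕ → ℝ := fun j => (c (j + 1) - c j) / ∫ z in x0..x1, B j n z with hd
    have H1 : ∀ j ≤ n, ContinuousOn (w' j) (Set.Icc x0 x1) := by
      intro j hj
      by_cases hj0 : j = 0
      · simp only [hw', hj0, if_pos rfl]
        exact continuousOn_const
      · simp only [hw', hj0, if_false]
        exact hw_cont (j + 1) (by omega)
    have H2 : ∀ j ≤ n, ∀ x ∈ Set.Icc x0 x1, 0 < w' j x := by
      intro j hj x hxm
      by_cases hj0 : j = 0
      · simp only [hw', hj0, if_pos rfl]
        exact one_pos
      · simp only [hw', hj0, if_false]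
        exact hw_pos (j + 1) (by omega) x hxm
    have H3 : ∀ x ∈ Set.Icc x0 x1, w' 0 x = 1 := by
      intro x hxm
      simp [hw']
    have H4 : ∀ q ≤ n, ∀ j ≤ q, ContinuousOn (B' j q) (Set.Icc x0 x1) := by
      intro q hq j hjq
      by_cases hqn : q = n
      · simp only [hB', hqn, if_pos rfl]
        exact (hB_cont n (Nat.le_succ n) j (hqn ▸ hjq)).div (hw_cont 1 (by omega)) hw1
      · simp only [hB', hqn, if_false]
        exact hB_cont q (by omega) j hjq
    have H5 : ∀ q < n, ∀ j ≤ q, 0 < ∫ y in x0..x1, B' j q y := by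
      intro q hq j hjq
      have hqn : q ≠ n := by omega
      simp only [hB', hqn, if_false]
      exact hb_pos q (by omega) j hjq
    have H6 : ∀ x ∈ Set.Icc x0 x1, B' 0 0 x = w' n x := by
      intro x hxm
      by_cases hn0 : n = 0
      · subst hn0
        simp only [hB', hw', if_pos rfl]
        rw [hrec0 x hxm]
        exact div_self (hw1 x hxm)
      · have h0n : (0 : ℕ) ≠ n := fun h => hn0 h.symm
        simp only [hB', hw', h0n, hn0, if_false]
        exact hrec0 x hxm
    have H7 : ∀ q < n, ∀ x ∈ Set.Icc x0 x1,
        B' 0 (q + 1) x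
          = w' (n - (q + 1)) x *
              (1 - ∫ y in x0..x, B' 0 q y / (∫ z in x0..x1, B' 0 q z)) := by
      intro q hq x hxm
      have hqn : q ≠ n := by omega
      have h := hrec_first q (by omega) x hxm
      by_cases hq1 : q + 1 = n
      · have h2 : n + 1 - (q + 1) = 1 := by omega
        rw [h2] at h
        rw [hq1] at h ⊢
        simp only [hB', hw', Nat.sub_self, if_pos rfl, hqn, if_false]
        rw [h, mul_comm (w 1 x), mul_div_assoc, div_self (hw1 x hxm), mul_one, one_mul]
      · have h2 : n - (q + 1) ≠ 0 := by omega
        have h4 : n - (q + 1) + 1 = n + 1 - (q + 1) := by omega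
        simp only [hB', hw', hq1, hqn, h2, if_false]
        rw [h4]
        exact h
    have H8 : ∀ q < n, ∀ j, 0 < j → j < q + 1 → ∀ x ∈ Set.Icc x0 x1,
        B' j (q + 1) x
          = w' (n - (q + 1)) x *
              ∫ y in x0..x, (B' (j - 1) q y / (∫ z in x0..x1, B' (j - 1) q z)
                - B' j q y / (∫ z in x0..x1, B' j q z)) := by
      intro q hq j hj0 hjq x hxm
      have hqn : q ≠ n := by omega
      have h := hrec_mid q (by omega) j hj0 hjq x hxm
      by_cases hq1 : q + 1 = n
      · have h2 : n + 1 - (q + 1) = 1 := by omega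
        rw [h2] at h
        rw [hq1] at h ⊢
        simp only [hB', hw', Nat.sub_self, if_pos rfl, hqn, if_false]
        rw [h, mul_comm (w 1 x), mul_div_assoc, div_self (hw1 x hxm), mul_one, one_mul]
      · have h2 : n - (q + 1) ≠ 0 := by omega
        have h4 : n - (q + 1) + 1 = n + 1 - (q + 1) := by omega
        simp only [hB', hw', hq1, hqn, h2, if_false]
        rw [h4]
        exact h
    have H9 : ∀ q < n, ∀ x ∈ Set.Icc x0 x1,
        B' (q + 1) (q + 1) x
          = w' (n - (q + 1)) x * ∫ y in x0..x, B' q q y / (∫ z in x0..x1, B' q q z) := by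
      intro q hq x hxm
      have hqn : q ≠ n := by omega
      have h := hrec_last q (by omega) x hxm
      by_cases hq1 : q + 1 = n
      · have h2 : n + 1 - (q + 1) = 1 := by omega
        rw [h2] at h
        rw [hq1] at h ⊢
        simp only [hB', hw', Nat.sub_self, if_pos rfl, hqn, if_false]
        rw [h, mul_comm (w 1 x), mul_div_assoc, div_self (hw1 x hxm), mul_one, one_mul]
      · have h2 : n - (q + 1) ≠ 0 := by omega
        have h4 : n - (q + 1) + 1 = n + 1 - (q + 1) := by omega
        simp only [hB', hw', hq1, hqn, h2, if_false]
        rw [h4]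
        exact h
    have hdsum : ∀ x ∈ Set.Icc x0 x1,
        ∑ j ∈ Finset.range (n + 1), d j * B' j n x = 0 := by
      intro x hxm
      have h := hg0 x hxm
      simp only [hB', hd, if_pos rfl]
      have hrw : ∀ j ∈ Finset.range (n + 1),
          (c (j + 1) - c j) / (∫ z in x0..x1, B j n z) * (B j n x / w 1 x)
            = ((c (j + 1) - c j) * (B j n x / ∫ z in x0..x1, B j n z)) / w 1 x :=
        fun j _ => by ring
      rw [Finset.sum_congr rfl hrw, ← Finset.sum_div, h, zero_div]
    have hdz : ∀ j ≤ n, d j = 0 :=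
      IH w' B' H1 H2 H3 H4 H5 H6 H7 H8 H9 d hdsum
    have hstep : ∀ j ≤ n, c (j + 1) = c j := by
      intro j hj
      have h := hdz j hj
      simp only [hd] at h
      have h5 := (div_eq_zero_iff.mp h).resolve_right (hbpos j hj).ne'
      linarith
    have hall : ∀ j, j ≤ n + 1 → c j = 0 := by
      intro j
      induction j with
      | zero => intro _; exact hc0
      | succ k ihk =>
        intro hk
        rw [hstep k (by omega)]
        exact ihk (by omega)
    exact hall

/-- Under the Tchebycheffian Bernstein integral recurrence hypotheses, with each weight
`w_j` additionally `(p−j)`-times continuously differentiable on `[x_0, x_1]`, the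
top-level Tchebycheffian Bernstein functions `B_{0,p}, …, B_{p,p}` are linearly
independent as functions on `[x_0, x_1]`. -/
theorem tcheb_bernstein_linear_independence
    (x0 x1 : ℝ) (hx : x0 < x1) (p : ℕ) (w : ℕ → ℝ → ℝ) (B : ℕ → ℕ → ℝ → ℝ)
    (hw_cont : ∀ j ≤ p, ContinuousOn (w j) (Set.Icc x0 x1))
    (hw_pos : ∀ j ≤ p, ∀ x ∈ Set.Icc x0 x1, 0 < w j x)
    (hw0 : ∀ x ∈ Set.Icc x0 x1, w 0 x = 1)
    (hw_smooth : ∀ j ≤ p, ContDiffOn ℝ (↑(p - j)) (w j) (Set.Icc x0 x1))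
    (hB_cont : ∀ q ≤ p, ∀ j ≤ q, ContinuousOn (B j q) (Set.Icc x0 x1))
    (hb_pos : ∀ q < p, ∀ j ≤ q, 0 < ∫ y in x0..x1, B j q y)
    (hrec0 : ∀ x ∈ Set.Icc x0 x1, B 0 0 x = w p x)
    (hrec_first : ∀ q < p, ∀ x ∈ Set.Icc x0 x1,
      B 0 (q + 1) x
        = w (p - (q + 1)) x * (1 - ∫ y in x0..x, B 0 q y / (∫ z in x0..x1, B 0 q z)))
    (hrec_mid : ∀ q < p, ∀ j, 0 < j → j < q + 1 → ∀ x ∈ Set.Icc x0 x1,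
      B j (q + 1) x
        = w (p - (q + 1)) x *
            ∫ y in x0..x, (B (j - 1) q y / (∫ z in x0..x1, B (j - 1) q z)
              - B j q y / (∫ z in x0..x1, B j q z)))
    (hrec_last : ∀ q < p, ∀ x ∈ Set.Icc x0 x1,
      B (q + 1) (q + 1) x
        = w (p - (q + 1)) x * ∫ y in x0..x, B q q y / (∫ z in x0..x1, B q q z)) :
    ∀ c : ℕ → ℝ,
      (∀ x ∈ Set.Icc x0 x1, ∑ j ∈ Finset.range (p + 1), c j * B j p x = 0) →
      ∀ j ≤ p, c j = 0 :=
  tb_aux x0 x1 hx p w B hw_cont hw_pos hw0 hB_cont hb_pos hrec0 hrec_first hrec_mid hrec_last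
end
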